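/- Let p₁, p₂, p₃, p₄ be four distinct points in ℝ² and let L be a finite family of affine lines in ℝ², none of which contains any of the four points. For each line ℓ ∈ L, the two open half-planes bounded by ℓ partition {p₁,p₂,p₃,p₄} and, when both parts are nonempty, induce a proper split of the 4-element point set. Then the number of distinct proper splits of {p₁,p₂,p₃,p₄} induced by the lines of L is at most 6. -/

import Mathlib

open Set

/-- The plane. -/
abbrev Plane : Type := ℝ × ℝ

/-! ### Splits -/

/-- A split of a type `α` is an unordered pair `{A, B}` of disjoint nonempty subsets
covering `α`. -/
def IsSplit {α : Type} (s : Set (Set α)) : Prop :=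
  ∃ A B : Set α, A.Nonempty ∧ B.Nonempty ∧ Disjoint A B ∧ A ∪ B = Set.univ ∧ s = {A, B}

/-- The split system induced on a subset `Y`: restrict each split `{A, B} ∈ S` to
`{A ∩ Y, B ∩ Y}` provided both intersections are nonempty. -/
def restrictSystem {α : Type} (S : Set (Set (Set α))) (Y : Set α) : Set (Set (Set α)) :=
  { s | ∃ A B : Set α, {A, B} ∈ S ∧ (A ∩ Y).Nonempty ∧ (B ∩ Y).Nonempty ∧
        s = {A ∩ Y, B ∩ Y} }

/-! ### Pseudolines and arrangements -/

/-- A pseudoline is the image of a proper topological embedding of `ℝ` into the plane. -/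
def IsPseudoline (L : Set Plane) : Prop :=
  ∃ f : ℝ → Plane, IsProperMap f ∧ Function.Injective f ∧ Set.range f = L

/-- `U` and `V` are the two sides (connected components of the complement) of the
pseudoline `L`. -/
def IsSidePair (L U V : Set Plane) : Prop :=
  IsOpen U ∧ IsOpen V ∧ U.Nonempty ∧ V.Nonempty ∧
  IsPreconnected U ∧ IsPreconnected V ∧ Disjoint U V ∧ U ∪ V = Lᶜ

/-- Two pseudolines cross: they meet in exactly one point and each meets both sides of
the other. -/
def Crosses (L₁ L₂ : Set Plane) : Prop :=
  (∃! p, p ∈ L₁ ∩ L₂) ∧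
  (∀ U V, IsSidePair L₁ U V → (L₂ ∩ U).Nonempty ∧ (L₂ ∩ V).Nonempty) ∧
  (∀ U V, IsSidePair L₂ U V → (L₁ ∩ U).Nonempty ∧ (L₁ ∩ V).Nonempty)

/-- An arrangement of pseudolines: a finite set of pairwise crossing pseudolines. -/
def IsArrangement (𝒜 : Set (Set Plane)) : Prop :=
  𝒜.Finite ∧ (∀ L ∈ 𝒜, IsPseudoline L) ∧
  ∀ L₁ ∈ 𝒜, ∀ L₂ ∈ 𝒜, L₁ ≠ L₂ → Crosses L₁ L₂

/-- A weak arrangement of pseudolines: any two members are disjoint or cross. -/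
def IsWeakArrangement (𝒜 : Set (Set Plane)) : Prop :=
  𝒜.Finite ∧ (∀ L ∈ 𝒜, IsPseudoline L) ∧
  ∀ L₁ ∈ 𝒜, ∀ L₂ ∈ 𝒜, L₁ ≠ L₂ → Disjoint L₁ L₂ ∨ Crosses L₁ L₂

/-- The split system induced on placed points `pos : α → Plane` by a collection of
pseudolines: each pseudoline both of whose sides contain placed points induces the
corresponding bipartition of `α`. -/
def InducedSplits {α : Type} (pos : α → Plane) (𝒜 : Set (Set Plane)) :
    Set (Set (Set α)) :=
  { s | ∃ L ∈ 𝒜, ∃ U V : Set Plane, IsSidePair L U V ∧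
        (pos ⁻¹' U).Nonempty ∧ (pos ⁻¹' V).Nonempty ∧
        s = {pos ⁻¹' U, pos ⁻¹' V} }

/-- A split system is flat if it is exactly the split system induced by some arrangement
of pseudolines on some injective placement of the points, none of which lies on a
pseudoline. -/
def IsFlat {α : Type} (S : Set (Set (Set α))) : Prop :=
  ∃ pos : α → Plane, Function.Injective pos ∧
    ∃ 𝒜 : Set (Set Plane), IsArrangement 𝒜 ∧
      (∀ x : α, ∀ L ∈ 𝒜, pos x ∉ L) ∧ InducedSplits pos 𝒜 = S

/-! ### Sign vectors and oriented matroids (via topes) -/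

/-- Composition of sign vectors: agrees with `V` where `V` is nonzero, with `U` elsewhere. -/
def SVcomp {α : Type} (V U : α → SignType) : α → SignType :=
  fun x => if V x = 0 then U x else V x

/-- `V` is a restriction of `U`. -/
def SVrestriction {α : Type} (V U : α → SignType) : Prop :=
  ∀ x, V x ≠ 0 → V x = U x

def SVsupport {α : Type} (T : α → SignType) : Set α := {x | T x ≠ 0}

def SVplus {α : Type} (T : α → SignType) : Set α := {x | T x = 1}

def SVminus {α : Type} (T : α → SignType) : Set α := {x | T x = -1}

/-- The tope axioms (T0), (T1), (T2) for a set of sign vectors. -/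
def IsTopeSet {α : Type} (𝒯 : Set (α → SignType)) : Prop :=
  𝒯.Nonempty ∧
  (∀ T ∈ 𝒯, -T ∈ 𝒯) ∧
  ∀ V : α → SignType, (∃ T ∈ 𝒯, SVrestriction V T) →
    (∃ T' ∈ 𝒯, SVcomp V T' ∈ 𝒯 ∧ SVcomp V (-T') ∉ 𝒯) ∨ (∀ T' ∈ 𝒯, SVcomp V T' ∈ 𝒯)

/-- Covectors of a tope set. -/
def Covectors {α : Type} (𝒯 : Set (α → SignType)) : Set (α → SignType) :=
  { Y | ∀ T ∈ 𝒯, SVcomp Y T ∈ 𝒯 }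

/-- Cocircuits: covectors with nonempty support, minimal with respect to inclusion of
supports among covectors with nonempty support. -/
def Cocircuits {α : Type} (𝒯 : Set (α → SignType)) : Set (α → SignType) :=
  { Y | Y ∈ Covectors 𝒯 ∧ (SVsupport Y).Nonempty ∧
        ∀ Z ∈ Covectors 𝒯, (SVsupport Z).Nonempty →
          SVsupport Z ⊆ SVsupport Y → SVsupport Z = SVsupport Y }

/-- The rank: least cardinality of a set intersecting the support of every cocircuit. -/
noncomputable def OMrank {α : Type} (𝒯 : Set (α → SignType)) : ℕ :=
  sInf { n | ∃ A : Set α, A.ncard = n ∧ ∀ C ∈ Cocircuits 𝒯, (A ∩ SVsupport C).Nonempty }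

/-- Loop-free: every tope has full support. -/
def OMLoopFree {α : Type} (𝒯 : Set (α → SignType)) : Prop :=
  ∀ T ∈ 𝒯, SVsupport T = Set.univ

/-- Acyclic: the all-`+` sign vector is a tope. -/
def OMAcyclic {α : Type} (𝒯 : Set (α → SignType)) : Prop :=
  (fun _ => 1) ∈ 𝒯

/-- A split system is encoded by a loop-free acyclic rank-3 oriented matroid on element
set `α` if each of its splits arises as the positive/negative parts of a tope. -/
def EncodedByOM3 {α : Type} (S : Set (Set (Set α))) : Prop :=
  ∃ 𝒯 : Set (α → SignType), IsTopeSet 𝒯 ∧ OMLoopFree 𝒯 ∧ OMAcyclic 𝒯 ∧ OMrank 𝒯 = 3 ∧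
    ∀ s ∈ S, ∃ T ∈ 𝒯, s = {SVplus T, SVminus T}

/-! ### Split networks -/

/-- A split network on a label set `α`: a finite connected simple graph, labelled by `α`,
which is a partial cube (isometric subgraph of a hypercube, with every coordinate used). -/
structure SplitNetwork (α : Type) where
  V : Type
  finV : Finite V
  G : SimpleGraph V
  conn : G.Connected
  lab : α → V
  k : ℕ
  f : V → Fin k → Bool
  inj : Function.Injective f
  iso : ∀ u v : V, G.dist u v = hammingDist (f u) (f v)
  flip : ∀ i : Fin k, ∃ u v : V, G.Adj u v ∧ f u i ≠ f v i

/-- The edge `{u,v}` belongs to the edge class `ε_i`: its endpoints differ exactly in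
coordinate `i`. -/
def SplitNetwork.InClass {α : Type} (N : SplitNetwork α) (i : Fin N.k) (u v : N.V) : Prop :=
  N.G.Adj u v ∧ ∀ j : Fin N.k, (N.f u j ≠ N.f v j ↔ j = i)

/-- The splits of `α` induced by the edge classes of the network. -/
def SplitNetwork.inducedSplits {α : Type} (N : SplitNetwork α) : Set (Set (Set α)) :=
  { s | ∃ i : Fin N.k,
      {x : α | N.f (N.lab x) i = true}.Nonempty ∧
      {x : α | N.f (N.lab x) i = false}.Nonempty ∧
      s = {{x : α | N.f (N.lab x) i = true}, {x : α | N.f (N.lab x) i = false}} }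

/-- The union of all (closed) edge segments of a drawing. -/
def SplitNetwork.edgeSegs {α : Type} (N : SplitNetwork α) (pos : N.V → Plane) : Set Plane :=
  { q | ∃ u v : N.V, N.G.Adj u v ∧ q ∈ segment ℝ (pos u) (pos v) }

/-- A drawing of a split network: an injective placement of the vertices such that all
edges of any one class are realized by a common vector, up to sign. -/
def SplitNetwork.IsDrawing {α : Type} (N : SplitNetwork α) (pos : N.V → Plane) : Prop :=
  Function.Injective pos ∧
  ∀ i : Fin N.k, ∃ w : Plane, w ≠ 0 ∧
    ∀ u v : N.V, N.InClass i u v → pos u - pos v = w ∨ pos u - pos v = -w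

/-- `C` is a connected component of the set `s`. -/
def IsCompOf (C s : Set Plane) : Prop :=
  ∃ x ∈ s, C = connectedComponentIn s x

/-- A planar drawing: distinct edge segments meet only in common endpoints, all bounded
complementary components are strictly convex open sets, and the boundary of the unbounded
component contains a full edge segment from every class. -/
def SplitNetwork.IsPlanarDrawing {α : Type} (N : SplitNetwork α) (pos : N.V → Plane) :
    Prop :=
  N.IsDrawing pos ∧
  (∀ u v u' v' : N.V, N.G.Adj u v → N.G.Adj u' v' →
      segment ℝ (pos u) (pos v) ≠ segment ℝ (pos u') (pos v') →
      segment ℝ (pos u) (pos v) ∩ segment ℝ (pos u') (pos v') ⊆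
        ({pos u, pos v} ∩ {pos u', pos v'} : Set Plane)) ∧
  (∀ C : Set Plane, IsCompOf C (N.edgeSegs pos)ᶜ → Bornology.IsBounded C →
      IsOpen C ∧ StrictConvex ℝ C) ∧
  (∀ C : Set Plane, IsCompOf C (N.edgeSegs pos)ᶜ → ¬ Bornology.IsBounded C →
      ∀ i : Fin N.k, ∃ u v : N.V, N.InClass i u v ∧
        segment ℝ (pos u) (pos v) ⊆ frontier C)

/-- `S` has a planar split network representation: some planar split network labelled by
`α` induces every split of `S`. -/
def HasPlanarRep {α : Type} (S : Set (Set (Set α))) : Prop :=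
  ∃ N : SplitNetwork α, (∃ pos : N.V → Plane, N.IsPlanarDrawing pos) ∧
    S ⊆ N.inducedSplits

/-- The edge segments of class `i` lying on the boundary of a region `F`. -/
def SplitNetwork.boundarySegs {α : Type} (N : SplitNetwork α) (pos : N.V → Plane)
    (i : Fin N.k) (F : Set Plane) : Set (Set Plane) :=
  { s | ∃ u v : N.V, N.InClass i u v ∧ s = segment ℝ (pos u) (pos v) ∧ s ⊆ frontier F }

/-! A Radon partition `{I, Iᶜ}` of the four points — one whose two convex hulls meet — is
a split of `Fin 4` that no line avoiding the points induces, since the common point of the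
hulls would lie in both open half-planes. Of the `2 ^ 3 - 1 = 7` splits of a four-element
set, at most the other six can therefore occur. -/

section Splits

variable {α : Type}

theorem isSplit_pair_compl {A : Set α} (hA : A.Nonempty) (hAc : Aᶜ.Nonempty) :
    IsSplit {A, Aᶜ} :=
  ⟨A, Aᶜ, hA, hAc, disjoint_compl_right, union_compl_self A, rfl⟩

theorem IsSplit.exists_eq_pair_compl {s : Set (Set α)} (hs : IsSplit s) :
    ∃ A : Set α, A.Nonempty ∧ Aᶜ.Nonempty ∧ s = {A, Aᶜ} := by
  obtain ⟨A, B, hA, hB, hdisj, hunion, rfl⟩ := hs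
  obtain rfl : B = Aᶜ := (IsCompl.compl_eq ⟨hdisj, codisjoint_iff.mpr hunion⟩).symm
  exact ⟨A, hA, hB, rfl⟩

theorem ncard_setOf_mem [Fintype α] (a : α) :
    {A : Set α | a ∈ A}.ncard = 2 ^ (Fintype.card α - 1) := by
  set S : Set (Set α) := {A | a ∈ A}
  have hcompl : compl '' S = Sᶜ := by
    rw [image_eq_preimage_of_inverse compl_compl compl_compl]
    rfl
  have hsum : S.ncard + S.ncard = 2 ^ Fintype.card α := by
    conv_lhs => arg 2; rw [← ncard_image_of_injective S compl_injective, hcompl]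
    rw [ncard_add_ncard_compl, Nat.card_eq_fintype_card, Fintype.card_set]
  obtain ⟨n, hn⟩ := Nat.exists_eq_add_one_of_ne_zero (Fintype.card_pos_iff.mpr ⟨a⟩).ne'
  rw [hn, pow_succ] at hsum
  rw [hn, Nat.add_sub_cancel]
  omega

/-- Choosing for each split the side containing a fixed point `a` leaves `2 ^ (n - 1)` sets,
one of which, `univ`, is not a side. -/
theorem ncard_setOf_isSplit_le [Fintype α] :
    {s : Set (Set α) | IsSplit s}.ncard ≤ 2 ^ (Fintype.card α - 1) - 1 := by
  cases isEmpty_or_nonempty α with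
  | inl hα =>
    have : {s : Set (Set α) | IsSplit s} = ∅ :=
      eq_empty_of_forall_notMem fun _ ⟨_, _, ⟨x, _⟩, _⟩ => hα.false x
    simp [this]
  | inr hα =>
    obtain ⟨a⟩ := hα
    have hsub : {s : Set (Set α) | IsSplit s} ⊆
        (fun A => {A, Aᶜ}) '' ({A : Set α | a ∈ A} \ {univ}) := by
      intro s hs
      obtain ⟨A, hA, hAc, rfl⟩ := hs.exists_eq_pair_compl
      by_cases ha : a ∈ A
      · exact ⟨A, ⟨ha, fun h => hAc.ne_empty (by simp [show A = univ from h])⟩, rfl⟩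
      · refine ⟨Aᶜ, ⟨ha, fun h => hA.ne_empty (by simpa using h)⟩, ?_⟩
        simp only [compl_compl, pair_comm]
    calc {s : Set (Set α) | IsSplit s}.ncard
        ≤ ((fun A => {A, Aᶜ}) '' ({A : Set α | a ∈ A} \ {univ})).ncard := ncard_le_ncard hsub
      _ ≤ ({A : Set α | a ∈ A} \ {univ}).ncard := ncard_image_le
      _ = 2 ^ (Fintype.card α - 1) - 1 := by
        rw [ncard_sdiff_singleton_of_mem (show univ ∈ {A : Set α | a ∈ A} from mem_univ a),
          ncard_setOf_mem]

end Splits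

section Separation

variable {𝕜 E ι : Type*} [Field 𝕜] [LinearOrder 𝕜] [IsStrictOrderedRing 𝕜]
  [AddCommGroup E] [Module 𝕜 E]

theorem setOf_lt_eq_compl_setOf_gt {β : Type*} [LinearOrder β] {g : ι → β} {c : β}
    (hg : ∀ i, g i ≠ c) : {i | g i < c} = {i | c < g i}ᶜ := by
  ext i
  simp only [mem_ofPred_eq, mem_compl_iff, not_lt]
  exact (hg i).le_iff_lt.symm

theorem disjoint_convexHull_of_forall_lt_of_forall_gt {f : E →ₗ[𝕜] 𝕜} {c : 𝕜} {s t : Set E}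
    (hs : ∀ x ∈ s, c < f x) (ht : ∀ x ∈ t, f x < c) :
    Disjoint (convexHull 𝕜 s) (convexHull 𝕜 t) :=
  Disjoint.mono (convexHull_min hs (convex_halfSpace_gt f.isLinear c))
    (convexHull_min ht (convex_halfSpace_lt f.isLinear c))
    (disjoint_left.mpr fun _ hx hx' => lt_asymm hx hx')

theorem setOf_lt_ne_of_convexHull_inter_nonempty {p : ι → E} {f : E →ₗ[𝕜] 𝕜} {c : 𝕜}
    (hpc : ∀ i, f (p i) ≠ c) {I : Set ι}
    (hI : (convexHull 𝕜 (p '' I) ∩ convexHull 𝕜 (p '' Iᶜ)).Nonempty) :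
    {i | c < f (p i)} ≠ I := by
  rintro rfl
  refine not_disjoint_iff_nonempty_inter.mpr hI
    (disjoint_convexHull_of_forall_lt_of_forall_gt (f := f) (c := c) ?_ ?_)
  · rintro _ ⟨i, hi, rfl⟩
    exact hi
  · rintro _ ⟨i, hi, rfl⟩
    exact (not_lt.mp hi).lt_of_ne (hpc i)

theorem radon_partition_of_finrank_add_one_lt_card [Fintype ι] [FiniteDimensional 𝕜 E]
    {p : ι → E} (hcard : Module.finrank 𝕜 E + 1 < Fintype.card ι) :
    ∃ I : Set ι, (convexHull 𝕜 (p '' I) ∩ convexHull 𝕜 (p '' Iᶜ)).Nonempty :=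
  Convex.radon_partition fun h => hcard.not_ge <|
    h.card_le_finrank_succ.trans (Nat.add_le_add_right (Submodule.finrank_le _) 1)

end Separation

theorem affine_lines_induce_at_most_six_splits_general
    (p : Fin 4 → Plane)
    (L : Finset ((Plane →ₗ[ℝ] ℝ) × ℝ))
    (havoid : ∀ l ∈ L, ∀ i : Fin 4, l.1 (p i) ≠ l.2) :
    Set.ncard { s : Set (Set (Fin 4)) | ∃ l ∈ L,
        {i : Fin 4 | l.2 < l.1 (p i)}.Nonempty ∧
        {i : Fin 4 | l.1 (p i) < l.2}.Nonempty ∧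
        s = {{i : Fin 4 | l.2 < l.1 (p i)}, {i : Fin 4 | l.1 (p i) < l.2}} } ≤ 6 := by
  obtain ⟨I, hI⟩ := radon_partition_of_finrank_add_one_lt_card (𝕜 := ℝ) (p := p)
    (by simp)
  have hIc : (convexHull ℝ (p '' Iᶜ) ∩ convexHull ℝ (p '' Iᶜᶜ)).Nonempty := by
    rwa [compl_compl, inter_comm]
  have hradon : IsSplit {I, Iᶜ} :=
    isSplit_pair_compl (convexHull_nonempty_iff.mp hI.left).of_image
      (convexHull_nonempty_iff.mp hI.right).of_image
  calc _ ≤ ({s | IsSplit s} \ {{I, Iᶜ}}).ncard := ncard_le_ncard ?_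
    _ = {s : Set (Set (Fin 4)) | IsSplit s}.ncard - 1 := ncard_sdiff_singleton_of_mem hradon
    _ ≤ 6 := by
      have := ncard_setOf_isSplit_le (α := Fin 4)
      simp only [Fintype.card_fin] at this
      omega
  rintro s ⟨l, hl, hpos, hneg, rfl⟩
  rw [setOf_lt_eq_compl_setOf_gt (havoid l hl)] at hneg ⊢
  refine ⟨isSplit_pair_compl hpos hneg, fun h => ?_⟩
  rcases pair_eq_pair_iff.mp h with ⟨h, -⟩ | ⟨h, -⟩
  · exact setOf_lt_ne_of_convexHull_inter_nonempty (havoid l hl) hI h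
  · exact setOf_lt_ne_of_convexHull_inter_nonempty (havoid l hl) hIc h

/-- Four distinct points in the plane, separated by any finite family of affine lines
avoiding the points, are divided into at most 6 distinct proper splits. -/
theorem affine_lines_induce_at_most_six_splits
    (p : Fin 4 → Plane) (hp : Function.Injective p)
    (L : Finset ((Plane →ₗ[ℝ] ℝ) × ℝ)) (hL : ∀ l ∈ L, l.1 ≠ 0)
    (havoid : ∀ l ∈ L, ∀ i : Fin 4, l.1 (p i) ≠ l.2) :
    Set.ncard { s : Set (Set (Fin 4)) | ∃ l ∈ L,
        {i : Fin 4 | l.2 < l.1 (p i)}.Nonempty ∧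
        {i : Fin 4 | l.1 (p i) < l.2}.Nonempty ∧
        s = {{i : Fin 4 | l.2 < l.1 (p i)}, {i : Fin 4 | l.1 (p i) < l.2}} } ≤ 6 :=
  affine_lines_induce_at_most_six_splits_general p L havoid
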